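/- For a unit spinor Ψ₀ with ω·Ψ₀ = −7Ψ₀, the G₂ 3-form ω₁ associated with the spinor Ψ₁ = e₁·Ψ₀ satisfies ω₁ = −ω + 2(e₁ ⌟ ω)∧η₁ = η₁₂₃ − η₁₄₅ − η₁₆₇ + η₂₄₆ − η₂₅₇ + η₃₄₇ + η₃₅₆, and this equals ½η₁∧dη₁ − ½η₂∧dη₂ − ½η₃∧dη₃ in the 3-Sasakian model. -/
import Mathlib


/-- The basis 1-forms η₁,…,η₇ of Λ(ℝ⁷) (0-indexed: `η i` is η_{i+1}). -/
noncomputable def η (i : Fin 7) : ExteriorAlgebra ℝ (Fin 7 → ℝ) :=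
  ExteriorAlgebra.ι ℝ (Pi.single i 1)

/-- The dual of a vector v with respect to the standard inner product of ℝ⁷. -/
noncomputable def dvec (v : Fin 7 → ℝ) : Module.Dual ℝ (Fin 7 → ℝ) :=
  ∑ i : Fin 7, v i • LinearMap.proj i

/-- Interior product v ⌟ φ. -/
noncomputable def intProd (v : Fin 7 → ℝ) (x : ExteriorAlgebra ℝ (Fin 7 → ℝ)) :
    ExteriorAlgebra ℝ (Fin 7 → ℝ) :=
  CliffordAlgebra.contractLeft (dvec v) x

/-- The volume form η₁∧…∧η₇. -/
noncomputable def vol : ExteriorAlgebra ℝ (Fin 7 → ℝ) :=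
  η 0 * η 1 * η 2 * η 3 * η 4 * η 5 * η 6

/-- dη₁ = −2(η₂₃ + η₄₅ + η₆₇). -/
noncomputable def dη₁ : ExteriorAlgebra ℝ (Fin 7 → ℝ) :=
  (-2 : ℝ) • (η 1 * η 2 + η 3 * η 4 + η 5 * η 6)

/-- dη₂ = 2(η₁₃ − η₄₆ + η₅₇). -/
noncomputable def dη₂ : ExteriorAlgebra ℝ (Fin 7 → ℝ) :=
  (2 : ℝ) • (η 0 * η 2 - η 3 * η 5 + η 4 * η 6)

/-- dη₃ = −2(η₁₂ + η₄₇ + η₅₆). -/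
noncomputable def dη₃ : ExteriorAlgebra ℝ (Fin 7 → ℝ) :=
  (-2 : ℝ) • (η 0 * η 1 + η 3 * η 6 + η 4 * η 5)

/-- ω₁ := ½η₁∧dη₁ − ½η₂∧dη₂ − ½η₃∧dη₃. -/
noncomputable def ω₁ : ExteriorAlgebra ℝ (Fin 7 → ℝ) :=
  (1 / 2 : ℝ) • (η 0 * dη₁) - (1 / 2 : ℝ) • (η 1 * dη₂) - (1 / 2 : ℝ) • (η 2 * dη₃)

/-- ω₂ := −½η₁∧dη₁ + ½η₂∧dη₂ − ½η₃∧dη₃. -/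
noncomputable def ω₂ : ExteriorAlgebra ℝ (Fin 7 → ℝ) :=
  -((1 / 2 : ℝ) • (η 0 * dη₁)) + (1 / 2 : ℝ) • (η 1 * dη₂) - (1 / 2 : ℝ) • (η 2 * dη₃)

/-- ω₃ := −½η₁∧dη₁ − ½η₂∧dη₂ + ½η₃∧dη₃. -/
noncomputable def ω₃ : ExteriorAlgebra ℝ (Fin 7 → ℝ) :=
  -((1 / 2 : ℝ) • (η 0 * dη₁)) - (1 / 2 : ℝ) • (η 1 * dη₂) + (1 / 2 : ℝ) • (η 2 * dη₃)

/-- A 3-form φ is a generic (G₂) form whose associated bilinear form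
B_φ(X,Y)·vol := (X⌟φ)∧(Y⌟φ)∧φ is a nonzero multiple of the standard inner product. -/
def IsG2Generic (φ : ExteriorAlgebra ℝ (Fin 7 → ℝ)) : Prop :=
  ∃ c : ℝ, c ≠ 0 ∧ ∀ v w : Fin 7 → ℝ,
    intProd v φ * intProd w φ * φ = (c * ∑ i : Fin 7, v i * w i) • vol

/-- The canonical G₂ form ω = η₁₂₃ − η₁₄₅ − η₁₆₇ − η₂₄₆ + η₂₅₇ − η₃₄₇ − η₃₅₆. -/
noncomputable def ω : ExteriorAlgebra ℝ (Fin 7 → ℝ) :=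
  η 0 * η 1 * η 2 - η 0 * η 3 * η 4 - η 0 * η 5 * η 6 - η 1 * η 3 * η 5
    + η 1 * η 4 * η 6 - η 2 * η 3 * η 6 - η 2 * η 4 * η 5


lemma dvec_single (j : Fin 7) : dvec (Pi.single 0 1) (Pi.single j 1)
    = if j = 0 then 1 else 0 := by
  simp [dvec, Pi.single_apply, Finset.sum_ite_eq, mul_ite, eq_comm]

lemma eta_swap (i j : Fin 7) : η i * η j = -(η j * η i) :=
  CliffordAlgebra.ι_mul_ι_comm_of_isOrtho (QuadraticMap.IsOrtho.all _ _)

lemma contract_triple (a b c : Fin 7) :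
    intProd (Pi.single 0 1) (η a * η b * η c)
      = (if a = 0 then (1:ℝ) else 0) • (η b * η c)
        - (if b = 0 then (1:ℝ) else 0) • (η a * η c)
        + (if c = 0 then (1:ℝ) else 0) • (η a * η b) := by
  unfold intProd η ExteriorAlgebra.ι
  rw [mul_assoc, CliffordAlgebra.contractLeft_ι_mul, CliffordAlgebra.contractLeft_ι_mul,
    CliffordAlgebra.contractLeft_ι]
  simp only [dvec_single]
  simp only [mul_sub, mul_add, smul_sub, smul_add, mul_smul_comm, Algebra.mul_smul_comm,
    mul_assoc]
  simp only [Algebra.algebraMap_eq_smul_one, mul_smul_comm, mul_one, smul_smul]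
  abel

lemma contract_triple' (a b c : Fin 7) :
    CliffordAlgebra.contractLeft (dvec (Pi.single 0 1)) (η a * η b * η c)
      = (if a = 0 then (1:ℝ) else 0) • (η b * η c)
        - (if b = 0 then (1:ℝ) else 0) • (η a * η c)
        + (if c = 0 then (1:ℝ) else 0) • (η a * η b) := contract_triple a b c

lemma ip_omega : intProd (Pi.single 0 1) ω = η 1 * η 2 - η 3 * η 4 - η 5 * η 6 := by
  unfold ω intProd
  simp only [map_sub, map_add, contract_triple']
  simp only [Fin.reduceEq, if_false, if_true, reduceIte, one_smul, zero_smul, sub_zero, add_zero]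

lemma move0 (i j : Fin 7) : η i * η j * η 0 = η 0 * η i * η j := by
  rw [mul_assoc, eta_swap j 0, mul_neg, ← mul_assoc, eta_swap i 0, neg_mul, neg_neg, mul_assoc,
    ← mul_assoc]

/-- the G₂ 3-form associated with the spinor Ψ₁ = e₁·Ψ₀, namely
ω₁ = −ω + 2(e₁ ⌟ ω)∧η₁, equals η₁₂₃ − η₁₄₅ − η₁₆₇ + η₂₄₆ − η₂₅₇ + η₃₄₇ + η₃₅₆,
which equals ½η₁∧dη₁ − ½η₂∧dη₂ − ½η₃∧dη₃ in the 3-Sasakian model. -/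
theorem stmt17 :
    -ω + (2 : ℝ) • (intProd (Pi.single 0 1) ω * η 0)
      = η 0 * η 1 * η 2 - η 0 * η 3 * η 4 - η 0 * η 5 * η 6 + η 1 * η 3 * η 5
        - η 1 * η 4 * η 6 + η 2 * η 3 * η 6 + η 2 * η 4 * η 5
    ∧ -ω + (2 : ℝ) • (intProd (Pi.single 0 1) ω * η 0) = ω₁ := by
  constructor
  · rw [ip_omega]
    simp only [sub_mul, move0]
    unfold ω
    module
  · rw [ip_omega]
    simp only [sub_mul, move0]
    unfold ω ω₁ dη₁ dη₂ dη₃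
    simp only [mul_smul_comm, mul_add, mul_sub, ← mul_assoc, move0]
    rw [eta_swap 1 0, eta_swap 2 0]
    simp only [neg_mul, mul_neg]
    rw [mul_assoc (η 0) (η 2) (η 1), eta_swap 2 1, mul_neg, ← mul_assoc]
    module
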